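/- Fix an integer n ∈ {0, 1, 2}. In ℝ³ with the Euclidean norm, let v₁ = (0, √3, 0), v₂ = (3, 0, 0), v₃ = (n + 1/2, √3/2, 1). Suppose a, b, c ∈ ℤ are not all zero and the vector v = a·v₁ + b·v₂ + c·v₃ satisfies ‖v‖ ≤ 3 and, in addition, there exists k ∈ ℤ with 3√3 = k·‖v‖³ or there exists k ∈ ℤ with 27 = k·‖v‖³. Then v = v₁, v = −v₁, v = v₂, or v = −v₂. -/

import Mathlib

noncomputable section

open Real

/-- `v₁ = (0, √3, 0)`. -/
def v₁ : EuclideanSpace ℝ (Fin 3) := !₂[0, Real.sqrt 3, 0]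

/-- `v₂ = (3, 0, 0)`. -/
def v₂ : EuclideanSpace ℝ (Fin 3) := !₂[3, 0, 0]

/-- `v₃ = (n + 1/2, √3/2, 1)`. -/
def v₃ (n : ℤ) : EuclideanSpace ℝ (Fin 3) := !₂[(n : ℝ) + 1 / 2, Real.sqrt 3 / 2, 1]

/-!
Writing `v = a v₁ + b v₂ + c v₃`, the number `q = 4‖v‖²` is the integer
`(6b + (2n+1)c)² + 3(2a + c)² + 4c²`. Cubing and squaring the integrality condition gives
`k² q³ = 12³` or `k² q³ = 36³`, which leaves only `q ∈ {1, 3, 4, 9, 12, 36}`.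
If `c` is odd then `8 ∣ q`, which is none of these; if `c` is even, `q / 4 ∈ {1, 3, 9}` forces
`c = 0`, and then `q = 12 (3b² + a²)` gives `(a, b) ∈ {(±1, 0), (0, ±1)}`.
-/

def fourNormSq (n a b c : ℤ) : ℤ := (6 * b + (2 * n + 1) * c) ^ 2 + 3 * (2 * a + c) ^ 2 + 4 * c ^ 2

lemma norm_sq_mul_four_eq_fourNormSq (n a b c : ℤ) :
    ‖(a : ℝ) • v₁ + (b : ℝ) • v₂ + (c : ℝ) • v₃ n‖ ^ 2 * 4 = fourNormSq n a b c := by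
  have h3 : √3 ^ 2 = 3 := sq_sqrt (by norm_num)
  rw [EuclideanSpace.norm_sq_eq, Fin.sum_univ_three]
  simp only [v₁, v₂, v₃, fourNormSq, PiLp.add_apply, PiLp.smul_apply, Matrix.cons_val_zero,
    Matrix.cons_val_one, Matrix.cons_val, smul_eq_mul, norm_eq_abs, sq_abs, one_div, mul_zero,
    zero_add, add_zero, mul_one, Int.cast_add, Int.cast_pow, Int.cast_mul, Int.cast_ofNat,
    Int.cast_one]
  linear_combination (4 * ((a : ℝ) + c / 2) ^ 2) * h3

lemma eight_dvd_fourNormSq_of_odd (n a b : ℤ) {c : ℤ} (hc : Odd c) : 8 ∣ fourNormSq n a b c := by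
  obtain ⟨t, rfl⟩ := hc
  -- Both `6b + (2n+1)c` and `2a + c` are odd, and `(2p+1)² = 4p(p+1) + 1` with `p(p+1)` even.
  obtain ⟨u, hu⟩ := Int.even_mul_succ_self (3 * b + n * (2 * t + 1) + t)
  obtain ⟨w, hw⟩ := Int.even_mul_succ_self (a + t)
  obtain ⟨s, hs⟩ := Int.even_mul_succ_self t
  exact ⟨u + 3 * w + 4 * s + 1, by unfold fourNormSq; linear_combination 4 * hu + 12 * hw + 16 * hs⟩

lemma eq_zero_of_sq_add_three_sq_add_four_sq_mem {x y z : ℤ}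
    (h : x ^ 2 + 3 * y ^ 2 + 4 * z ^ 2 ∈ ({1, 3, 9} : Finset ℤ)) : z = 0 := by
  simp only [Finset.mem_insert, Finset.mem_singleton] at h
  have := sq_nonneg x; have := sq_nonneg y; have := sq_nonneg z
  obtain ⟨hx, hx'⟩ := abs_lt_of_sq_lt_sq' (show x ^ 2 < 4 ^ 2 by omega) (by norm_num)
  obtain ⟨hy, hy'⟩ := abs_lt_of_sq_lt_sq' (show y ^ 2 < 2 ^ 2 by omega) (by norm_num)
  obtain ⟨hz, hz'⟩ := abs_lt_of_sq_lt_sq' (show z ^ 2 < 2 ^ 2 by omega) (by norm_num)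
  interval_cases x <;> interval_cases y <;> interval_cases z <;> omega

lemma coeffs_of_fourNormSq_mem (n a b c : ℤ)
    (h : fourNormSq n a b c ∈ ({1, 3, 4, 9, 12, 36} : Finset ℤ)) :
    c = 0 ∧ (b = 0 ∧ (a = 1 ∨ a = -1) ∨ a = 0 ∧ (b = 1 ∨ b = -1)) := by
  simp only [Finset.mem_insert, Finset.mem_singleton] at h
  obtain ⟨z, rfl⟩ : Even c := by
    by_contra hc
    have := eight_dvd_fourNormSq_of_odd n a b (Int.not_even_iff_odd.mp hc)
    omega
  have hquarter : fourNormSq n a b (z + z) =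
      4 * ((3 * b + (2 * n + 1) * z) ^ 2 + 3 * (a + z) ^ 2 + 4 * z ^ 2) := by
    unfold fourNormSq; ring
  obtain rfl : z = 0 := eq_zero_of_sq_add_three_sq_add_four_sq_mem
    (x := 3 * b + (2 * n + 1) * z) (y := a + z)
    (by simp only [Finset.mem_insert, Finset.mem_singleton]; omega)
  have hab : fourNormSq n a b (0 + 0) = 12 * (3 * b ^ 2 + a ^ 2) := by unfold fourNormSq; ring
  have := sq_nonneg a; have := sq_nonneg b
  obtain ⟨ha, ha'⟩ := abs_lt_of_sq_lt_sq' (show a ^ 2 < 2 ^ 2 by omega) (by norm_num)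
  obtain ⟨hb, hb'⟩ := abs_lt_of_sq_lt_sq' (show b ^ 2 < 2 ^ 2 by omega) (by norm_num)
  interval_cases a <;> interval_cases b <;> omega

def cubeSqDivisors (m : ℕ) : Finset ℕ :=
  (Finset.range (m + 1)).filter (fun q => q ^ 3 ∣ m ^ 3 ∧ IsSquare (m ^ 3 / q ^ 3))

lemma mem_cubeSqDivisors_of_sq_mul_cube_eq {k : ℤ} {q m : ℕ} (hm : 0 < m)
    (h : k ^ 2 * q ^ 3 = m ^ 3) : q ∈ cubeSqDivisors m := by
  have hK : k.natAbs ^ 2 * q ^ 3 = m ^ 3 := by rw [← Int.natAbs_sq] at h; exact_mod_cast h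
  obtain ⟨hk, hq⟩ := mul_ne_zero_iff.mp (hK ▸ (pow_pos hm 3).ne')
  simp only [cubeSqDivisors, Finset.mem_filter, Finset.mem_range]
  refine ⟨Nat.lt_succ_of_le ?_, Dvd.intro_left _ hK, k.natAbs, ?_⟩
  · exact (Nat.pow_le_pow_iff_left three_ne_zero).mp
      (hK ▸ Nat.le_mul_of_pos_left _ (Nat.pos_of_ne_zero hk))
  · rw [← hK, Nat.mul_div_cancel _ (Nat.pos_of_ne_zero hq), sq]

lemma cubeSqDivisors_twelve : cubeSqDivisors 12 = {3, 12} := by decide +kernel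

lemma cubeSqDivisors_thirtySix : cubeSqDivisors 36 = {1, 4, 9, 36} := by decide +kernel

lemma mem_cubeSqDivisors_of_eq_mul_pow_three {x r : ℝ} {k : ℤ} {q m : ℕ} (hm : 0 < m)
    (hx : x ^ 2 * 4 = q) (hr : 64 * r ^ 2 = m ^ 3) (h : r = k * x ^ 3) : q ∈ cubeSqDivisors m := by
  refine mem_cubeSqDivisors_of_sq_mul_cube_eq (k := k) hm ?_
  have hreal : (k : ℝ) ^ 2 * (q : ℝ) ^ 3 = (m : ℝ) ^ 3 := by
    rw [← hx, ← hr, h]; ring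
  exact_mod_cast hreal

theorem appendixB_lattice_computation_general (n : ℤ)
    (a b c : ℤ)
    (v : EuclideanSpace ℝ (Fin 3))
    (hv : v = (a : ℝ) • v₁ + (b : ℝ) • v₂ + (c : ℝ) • v₃ n)
    (hint : (∃ k : ℤ, 3 * Real.sqrt 3 = (k : ℝ) * ‖v‖ ^ 3) ∨
            (∃ k : ℤ, (27 : ℝ) = (k : ℝ) * ‖v‖ ^ 3)) :
    v = v₁ ∨ v = -v₁ ∨ v = v₂ ∨ v = -v₂ := by
  have hnorm : ‖v‖ ^ 2 * 4 = fourNormSq n a b c := hv ▸ norm_sq_mul_four_eq_fourNormSq n a b c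
  obtain ⟨q, hq⟩ : ∃ q : ℕ, fourNormSq n a b c = q :=
    Int.eq_ofNat_of_zero_le (by exact_mod_cast hnorm ▸ (by positivity : (0 : ℝ) ≤ ‖v‖ ^ 2 * 4))
  rw [hq, Int.cast_natCast] at hnorm
  have hq_mem : q ∈ cubeSqDivisors 12 ∪ cubeSqDivisors 36 := by
    rw [Finset.mem_union]
    rcases hint with ⟨k, hk⟩ | ⟨k, hk⟩
    · exact .inl (mem_cubeSqDivisors_of_eq_mul_pow_three (by norm_num) hnorm
        (by norm_num [mul_pow]) hk)
    · exact .inr (mem_cubeSqDivisors_of_eq_mul_pow_three (by norm_num) hnorm (by norm_num) hk)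
  rw [cubeSqDivisors_twelve, cubeSqDivisors_thirtySix] at hq_mem
  obtain ⟨rfl, ⟨rfl, rfl | rfl⟩ | ⟨rfl, rfl | rfl⟩⟩ :=
    coeffs_of_fourNormSq_mem n a b c (by rw [hq]; fin_cases hq_mem <;> decide) <;>
    simp [hv]

/-- The lattice computation of Appendix B: for `n ∈ {0,1,2}`, the only
nonzero vectors `v = a·v₁ + b·v₂ + c·v₃` (`a, b, c ∈ ℤ`) of the lattice
generated by `v₁, v₂, v₃` with `‖v‖ ≤ 3` such that `3√3 / ‖v‖³` or
`27 / ‖v‖³` is an integer are `±v₁` and `±v₂`. -/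
theorem appendixB_lattice_computation (n : ℤ) (hn : n = 0 ∨ n = 1 ∨ n = 2)
    (a b c : ℤ) (habc : ¬(a = 0 ∧ b = 0 ∧ c = 0))
    (v : EuclideanSpace ℝ (Fin 3))
    (hv : v = (a : ℝ) • v₁ + (b : ℝ) • v₂ + (c : ℝ) • v₃ n)
    (hlen : ‖v‖ ≤ 3)
    (hint : (∃ k : ℤ, 3 * Real.sqrt 3 = (k : ℝ) * ‖v‖ ^ 3) ∨
            (∃ k : ℤ, (27 : ℝ) = (k : ℝ) * ‖v‖ ^ 3)) :
    v = v₁ ∨ v = -v₁ ∨ v = v₂ ∨ v = -v₂ :=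
  appendixB_lattice_computation_general n a b c v hv hint
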